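/- Let μ ∈ {−1,1}, let U ⊆ ℝ³ be open (coordinates indexed by 0,1,2, with ∂_m the partial derivative in the m-th coordinate), and let s, v, w : U → ℝ³ be C¹ maps satisfying at every point of U: s ·_μ s = μ, v ·_μ v = 1, v ·_μ s = 0, and w = s ×_μ v. Define ψ_m = v ·_μ ∂_m s + i w ·_μ ∂_m s for m = 1, 2. Then at every point of U one has s ·_μ (∂_1 s ×_μ ∂_2 s) = Re(ψ_1) Im(ψ_2) − Im(ψ_1) Re(ψ_2) = −Im(ψ_1 · conj(ψ_2)); equivalently, 2 μ s ·_μ (∂_1 s ×_μ ∂_2 s) = −2 μ Im(ψ_1 · conj(ψ_2)). -/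

import Mathlib

noncomputable section

/-- The inner product `v ·_μ w = μ v₀ w₀ + v₁ w₁ + v₂ w₂` on `ℝ³`. -/
def mdot (μ : ℝ) (v w : Fin 3 → ℝ) : ℝ :=
  μ * v 0 * w 0 + v 1 * w 1 + v 2 * w 2

/-- The standard cross product on `ℝ³`. -/
def cross3 (v w : Fin 3 → ℝ) : Fin 3 → ℝ :=
  ![v 1 * w 2 - v 2 * w 1, v 2 * w 0 - v 0 * w 2, v 0 * w 1 - v 1 * w 0]

/-- The cross product `v ×_μ w = η_μ · (v × w)`, where `η_μ = diag(μ,1,1)`. -/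
def mcross (μ : ℝ) (v w : Fin 3 → ℝ) : Fin 3 → ℝ :=
  ![μ * cross3 v w 0, cross3 v w 1, cross3 v w 2]

/-- Partial derivative in the `m`-th coordinate of an `ℝ³`-valued map on `ℝ³`. -/
def pdV (m : Fin 3) (f : (Fin 3 → ℝ) → (Fin 3 → ℝ)) (x : Fin 3 → ℝ) : Fin 3 → ℝ :=
  fderiv ℝ f x (Pi.single m 1)

/-! The identity is pointwise linear algebra in `(ℝ³, ·_μ, ×_μ)` with `μ² = 1`. For `v` a unit
vector orthogonal to `s` and `w = s ×_μ v`, the BAC–CAB rule gives `v ×_μ w = μ s`, so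
`s ·_μ (a ×_μ b) = μ (v ×_μ w) ·_μ (a ×_μ b)`, and the Binet–Cauchy identity turns this into
`(v ·_μ a)(w ·_μ b) - (w ·_μ a)(v ·_μ b)`. With `a = ∂₁s`, `b = ∂₂s` these are the real and
imaginary parts of `ψ₁` and `ψ₂`. -/

theorem Complex.im_mul_conj (z w : ℂ) : (z * (starRingEnd ℂ) w).im = z.im * w.re - z.re * w.im := by
  simp only [Complex.mul_im, Complex.conj_re, Complex.conj_im]
  ring

section SignedVectorAlgebra

variable {μ : ℝ}

theorem mdot_smul_left (c : ℝ) (v w : Fin 3 → ℝ) : mdot μ (c • v) w = c * mdot μ v w := by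
  simp only [mdot, Pi.smul_apply, smul_eq_mul]
  ring

theorem mdot_mcross_mcross (hμ : μ ^ 2 = 1) (p q a b : Fin 3 → ℝ) :
    mdot μ (mcross μ p q) (mcross μ a b) =
      μ * (mdot μ p a * mdot μ q b - mdot μ p b * mdot μ q a) := by
  simp only [mdot, mcross, cross3, Matrix.cons_val]
  linear_combination (μ * (p 1 * q 2 - p 2 * q 1) * (a 1 * b 2 - a 2 * b 1)
    - (p 0 * q 2 - p 2 * q 0) * (a 0 * b 2 - a 2 * b 0)
    - (p 0 * q 1 - p 1 * q 0) * (a 0 * b 1 - a 1 * b 0)) * hμ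

theorem mcross_mcross_self (hμ : μ ^ 2 = 1) (s v : Fin 3 → ℝ) :
    mcross μ v (mcross μ s v) = μ • (mdot μ v v • s - mdot μ v s • v) := by
  ext i
  fin_cases i <;>
    simp only [mdot, mcross, cross3, Matrix.cons_val, Pi.smul_apply, Pi.sub_apply, smul_eq_mul,
      Fin.zero_eta, Fin.mk_one, Fin.reduceFinMk]
  · linear_combination (-(v 0 * v 0 * s 0) + v 0 * s 0 * v 0) * hμ
  · linear_combination (-(v 0 * v 0 * s 1) + v 0 * s 0 * v 1) * hμ
  · linear_combination (-(v 0 * v 0 * s 2) + v 0 * s 0 * v 2) * hμ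

theorem mdot_mcross_eq_of_unit_orthogonal (hμ : μ ^ 2 = 1) {s v : Fin 3 → ℝ}
    (hvv : mdot μ v v = 1) (hvs : mdot μ v s = 0) (a b : Fin 3 → ℝ) :
    mdot μ s (mcross μ a b) =
      mdot μ v a * mdot μ (mcross μ s v) b - mdot μ (mcross μ s v) a * mdot μ v b := by
  have hframe : mcross μ v (mcross μ s v) = μ • s := by
    rw [mcross_mcross_self hμ, hvv, hvs, one_smul, zero_smul, sub_zero]
  calc mdot μ s (mcross μ a b) = μ * mdot μ (μ • s) (mcross μ a b) := by
        rw [mdot_smul_left, ← mul_assoc, ← sq, hμ, one_mul]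
    _ = μ * mdot μ (mcross μ v (mcross μ s v)) (mcross μ a b) := by rw [hframe]
    _ = _ := by
        rw [mdot_mcross_mcross hμ]
        linear_combination (mdot μ v a * mdot μ (mcross μ s v) b
          - mdot μ v b * mdot μ (mcross μ s v) a) * hμ

end SignedVectorAlgebra

theorem stmt8_general (μ : ℝ) (hμ : μ = 1 ∨ μ = -1)
    (U : Set (Fin 3 → ℝ))
    (s v w : (Fin 3 → ℝ) → (Fin 3 → ℝ))
    (h2 : ∀ x ∈ U, mdot μ (v x) (v x) = 1)
    (h3 : ∀ x ∈ U, mdot μ (v x) (s x) = 0)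
    (h4 : ∀ x ∈ U, w x = mcross μ (s x) (v x))
    (ψ : Fin 3 → (Fin 3 → ℝ) → ℂ)
    (hψ : ∀ m x, ψ m x =
      (mdot μ (v x) (pdV m s x) : ℂ) + Complex.I * (mdot μ (w x) (pdV m s x) : ℂ)) :
    ∀ x ∈ U,
      mdot μ (s x) (mcross μ (pdV 1 s x) (pdV 2 s x)) =
        (ψ 1 x).re * (ψ 2 x).im - (ψ 1 x).im * (ψ 2 x).re ∧
      mdot μ (s x) (mcross μ (pdV 1 s x) (pdV 2 s x)) =
        -(ψ 1 x * (starRingEnd ℂ) (ψ 2 x)).im ∧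
      2 * μ * mdot μ (s x) (mcross μ (pdV 1 s x) (pdV 2 s x)) =
        -2 * μ * (ψ 1 x * (starRingEnd ℂ) (ψ 2 x)).im := by
  intro x hx
  have hre : ∀ m, (ψ m x).re = mdot μ (v x) (pdV m s x) := by simp [hψ]
  have him : ∀ m, (ψ m x).im = mdot μ (w x) (pdV m s x) := by simp [hψ]
  have hmain : mdot μ (s x) (mcross μ (pdV 1 s x) (pdV 2 s x)) =
      (ψ 1 x).re * (ψ 2 x).im - (ψ 1 x).im * (ψ 2 x).re := by
    rw [hre, hre, him, him, h4 x hx]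
    exact mdot_mcross_eq_of_unit_orthogonal (sq_eq_one_iff.mpr hμ) (h2 x hx) (h3 x hx) _ _
  have hconj := Complex.im_mul_conj (ψ 1 x) (ψ 2 x)
  refine ⟨hmain, by linarith, by linear_combination (2 * μ) * hmain + (2 * μ) * hconj⟩

theorem stmt8 (μ : ℝ) (hμ : μ = 1 ∨ μ = -1)
    (U : Set (Fin 3 → ℝ)) (hU : IsOpen U)
    (s v w : (Fin 3 → ℝ) → (Fin 3 → ℝ))
    (hs : ContDiffOn ℝ 1 s U) (hv : ContDiffOn ℝ 1 v U) (hw : ContDiffOn ℝ 1 w U)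
    (h1 : ∀ x ∈ U, mdot μ (s x) (s x) = μ)
    (h2 : ∀ x ∈ U, mdot μ (v x) (v x) = 1)
    (h3 : ∀ x ∈ U, mdot μ (v x) (s x) = 0)
    (h4 : ∀ x ∈ U, w x = mcross μ (s x) (v x))
    (ψ : Fin 3 → (Fin 3 → ℝ) → ℂ)
    (hψ : ∀ m x, ψ m x =
      (mdot μ (v x) (pdV m s x) : ℂ) + Complex.I * (mdot μ (w x) (pdV m s x) : ℂ)) :
    ∀ x ∈ U,
      mdot μ (s x) (mcross μ (pdV 1 s x) (pdV 2 s x)) =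
        (ψ 1 x).re * (ψ 2 x).im - (ψ 1 x).im * (ψ 2 x).re ∧
      mdot μ (s x) (mcross μ (pdV 1 s x) (pdV 2 s x)) =
        -(ψ 1 x * (starRingEnd ℂ) (ψ 2 x)).im ∧
      2 * μ * mdot μ (s x) (mcross μ (pdV 1 s x) (pdV 2 s x)) =
        -2 * μ * (ψ 1 x * (starRingEnd ℂ) (ψ 2 x)).im :=
  stmt8_general μ hμ U s v w h2 h3 h4 ψ hψ
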